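/- Let H be an equationally noetherian group. A finitely generated H-limit group G is H-determined if and only if Rk(G) = 1. -/

import Mathlib

open FirstOrder FirstOrder.Language Cardinal

namespace Paper

variable (L : FirstOrder.Language.{0, 0})

/-- A tuple `a` generates `M`: every element is the value of a term at `a`. -/
def Generates {M : Type*} [L.Structure M] {n : ℕ} (a : Fin n → M) : Prop :=
  ∀ y : M, ∃ t : L.Term (Fin n), t.realize a = y

/-- A type over the language `L(c₁,…,cₙ)` in `k` free variables, represented as a set of
`L`-formulas in variables `Fin n ⊕ Fin k` (the first block playing the role of the constants). -/
def NType (n : ℕ) : Type := Σ k : ℕ, Set (L.Formula (Fin n ⊕ Fin k))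

variable {L}

/-- The pair `(M, a)` realizes the type `p` (in the language with the constants interpreted
as `a`). -/
def RealizesNType {M : Type*} [L.Structure M] {n : ℕ} (a : Fin n → M) (p : NType L n) : Prop :=
  ∃ v : Fin p.1 → M, ∀ φ ∈ p.2, φ.Realize (Sum.elim a v)

variable (L) in
/-- The type `pₙ(y) = { y ≠ τ(c̄) | τ an L-term }`. -/
def pType (n : ℕ) : NType L n :=
  ⟨1, { φ | ∃ t : L.Term (Fin n),
    φ = (Term.equal (t.relabel Sum.inl) (Term.var (Sum.inr 0))).not }⟩

/-- The complete type `p_ā(M)` of a tuple, viewed as a set of sentences of `L(c̄)`. -/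
def ctype {M : Type*} [L.Structure M] {n : ℕ} (a : Fin n → M) : NType L n :=
  ⟨0, { φ | ∃ ψ : L.Formula (Fin n), ψ.Realize a ∧ φ = ψ.relabel Sum.inl }⟩

/-- A type (in the language with constants) is supported over a class `K` of models-with-tuples
if some formula, satisfiable in `K`, forces realization of the type throughout `K`. -/
def Supported {T : L.Theory} {n : ℕ} (K : Set (Σ M : Theory.ModelType.{0, 0, 0} T, Fin n → M))
    (p : NType L n) : Prop :=
  ∃ φ : L.Formula (Fin n ⊕ Fin p.1),
    (∃ P ∈ K, ∃ v : Fin p.1 → P.1, φ.Realize (Sum.elim P.2 v)) ∧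
    ∀ P ∈ K, ∀ v : Fin p.1 → P.1, φ.Realize (Sum.elim P.2 v) →
      ∀ ψ ∈ p.2, ψ.Realize (Sum.elim P.2 v)

/-- `rk`: `RankEq T n α M` means the `n`-rank of `M` is `α`. Defined by transfinite
recursion: the rank is `α ≥ 1` iff for every generating `n`-tuple `ā`, `p_ā(M)` is
supported over the class of models (with generating tuple) of `T` omitting `pₙ` and the
complete types of all models of smaller rank. -/
def RankEq (T : L.Theory) (n : ℕ) : Ordinal.{0} → Theory.ModelType.{0, 0, 0} T → Prop :=
  Ordinal.lt_wf.fix fun α ih M =>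
    1 ≤ α ∧ (∃ a : Fin n → M, Generates L a) ∧
      ∀ a : Fin n → M, Generates L a →
        Supported
          { P : Σ N : T.ModelType, Fin n → N |
            ¬ RealizesNType (L := L) P.2 (pType L n) ∧
            ∀ β : Ordinal, (h : β < α) → ∀ N : T.ModelType, ih β h N →
              ∀ b : Fin n → N, Generates L b → ¬ RealizesNType (L := L) P.2 (ctype (L := L) b) }
          (ctype a)

/-- The class `K(T|P_{n,α})`: models of `T` with a distinguished `n`-tuple, omitting `pₙ`
(equivalently, generated by the tuple) and omitting the complete type of every `n`-generated
model of `T` of rank `< α`. -/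
def Kclass (T : L.Theory) (n : ℕ) (α : Ordinal.{0}) :
    Set (Σ M : Theory.ModelType.{0, 0, 0} T, Fin n → M) :=
  { P | ¬ RealizesNType (L := L) P.2 (pType L n) ∧
    ∀ β : Ordinal, β < α → ∀ N : T.ModelType, RankEq T n β N →
      ∀ b : Fin n → N, Generates L b → ¬ RealizesNType (L := L) P.2 (ctype (L := L) b) }

variable (L) in
/-- `n`-generated models of `T` (with countable carrier). -/
abbrev NGenModel (T : L.Theory) (n : ℕ) : Type 1 :=
  { M : Theory.ModelType.{0, 0, 0} T // ∃ a : Fin n → M, Generates L a }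

instance isoSetoid {T : L.Theory} {n : ℕ} : Setoid (NGenModel L T n) where
  r M N := Nonempty (M.1 ≃[L] N.1)
  iseqv := ⟨fun M => ⟨FirstOrder.Language.Equiv.refl L M.1⟩, fun ⟨e⟩ => ⟨e.symm⟩, fun ⟨e⟩ ⟨f⟩ => ⟨FirstOrder.Language.Equiv.comp f e⟩⟩

variable (L) in
/-- `α_n(T)`: the number of isomorphism classes of `n`-generated models of `T`. -/
def alphaCard (T : L.Theory) (n : ℕ) : Cardinal.{1} :=
  Cardinal.mk (Quotient (isoSetoid (L := L) (T := T) (n := n)))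

variable (L) in
/-- `T` is `n`-consistent: it has an `n`-generated model. -/
def NConsistent (T : L.Theory) (n : ℕ) : Prop :=
  ∃ M : Theory.ModelType.{0, 0, 0} T, ∃ a : Fin n → M, Generates L a


/-! ### Universal / existential formulas, ∀∃ theories -/

variable (L) in
/-- A universal formula: universal quantifiers over a quantifier-free formula. -/
def IsUniversalFormula {α : Type} (φ : L.Formula α) : Prop :=
  ∃ (k : ℕ) (ψ : L.BoundedFormula α k), ψ.IsQF ∧ φ = ψ.alls

variable (L) in
/-- An existential formula: existential quantifiers over a quantifier-free formula. -/
def IsExistentialFormula {α : Type} (φ : L.Formula α) : Prop :=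
  ∃ (k : ℕ) (ψ : L.BoundedFormula α k), ψ.IsQF ∧ φ = ψ.exs

/-- Iterated existential quantification of the last `k` bounded variables. -/
def exsTo {α : Type} : ∀ {m k : ℕ}, L.BoundedFormula α (m + k) → L.BoundedFormula α m
  | _, 0, φ => φ
  | _, _ + 1, φ => exsTo φ.ex

variable (L) in
/-- A `∀∃`-sentence: `∀ x̄ ∃ ȳ ψ` with `ψ` quantifier-free. -/
def IsAESentence (σ : L.Sentence) : Prop :=
  ∃ (m k : ℕ) (ψ : L.BoundedFormula Empty (m + k)), ψ.IsQF ∧ σ = (exsTo ψ).alls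

variable (L) in
/-- A `∀∃`-theory. -/
def IsAETheory (T : L.Theory) : Prop := ∀ σ ∈ T, IsAESentence L σ

/-- The universal type `p_{ā,∀}(M)` of a tuple: universal sentences of `L(c̄)` true of `ā`. -/
def utype {M : Type*} [L.Structure M] {n : ℕ} (a : Fin n → M) : NType L n :=
  ⟨0, { φ | ∃ ψ : L.Formula (Fin n),
    IsUniversalFormula L ψ ∧ ψ.Realize a ∧ φ = ψ.relabel Sum.inl }⟩

/-- A universal type is existentially supported over a class `K` if some existential formula,
satisfiable in `K`, forces its realization throughout `K`. -/
def ESupported {T : L.Theory} {n : ℕ} (K : Set (Σ M : Theory.ModelType.{0, 0, 0} T, Fin n → M))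
    (p : NType L n) : Prop :=
  ∃ φ : L.Formula (Fin n ⊕ Fin p.1), IsExistentialFormula L φ ∧
    (∃ P ∈ K, ∃ v : Fin p.1 → P.1, φ.Realize (Sum.elim P.2 v)) ∧
    ∀ P ∈ K, ∀ v : Fin p.1 → P.1, φ.Realize (Sum.elim P.2 v) →
      ∀ ψ ∈ p.2, ψ.Realize (Sum.elim P.2 v)

/-- `Rk`: the rank defined from universal types and existential supports. -/
def URankEq (T : L.Theory) (n : ℕ) : Ordinal.{0} → Theory.ModelType.{0, 0, 0} T → Prop :=
  Ordinal.lt_wf.fix fun α ih M =>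
    1 ≤ α ∧ (∃ a : Fin n → M, Generates L a) ∧
      ∀ a : Fin n → M, Generates L a →
        ESupported
          { P : Σ N : Theory.ModelType.{0, 0, 0} T, Fin n → N |
            ¬ RealizesNType (L := L) P.2 (pType L n) ∧
            ∀ β : Ordinal, (h : β < α) → ∀ N : Theory.ModelType.{0, 0, 0} T, ih β h N →
              ∀ b : Fin n → N, Generates L b → ¬ RealizesNType (L := L) P.2 (utype b) }
          (utype a)

/-- The class `K(T|Q_{n,α})` of the universal rank. -/
def UKclass (T : L.Theory) (n : ℕ) (α : Ordinal.{0}) :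
    Set (Σ M : Theory.ModelType.{0, 0, 0} T, Fin n → M) :=
  { P | ¬ RealizesNType (L := L) P.2 (pType L n) ∧
    ∀ β : Ordinal, β < α → ∀ N : Theory.ModelType.{0, 0, 0} T, URankEq T n β N →
      ∀ b : Fin n → N, Generates L b → ¬ RealizesNType (L := L) P.2 (utype b) }

/-! ### Types in finitely many variables, classes of models, omitting types -/

variable (L) in
/-- A type in finitely many variables. -/
def MType : Type := Σ k : ℕ, Set (L.Formula (Fin k))

variable (L) in
/-- A type all of whose formulas are universal. -/
def IsUniversalMType (p : MType L) : Prop := ∀ φ ∈ p.2, IsUniversalFormula L φ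

/-- A model realizes a type if some tuple satisfies all of its formulas. -/
def MRealizes {T : L.Theory} (M : Theory.ModelType.{0, 0, 0} T) (p : MType L) : Prop :=
  ∃ v : Fin p.1 → M, ∀ φ ∈ p.2, φ.Realize v

/-- The class `K(T|P)` of models of `T` omitting every type in `P`. -/
def KTP (T : L.Theory) (P : Set (MType L)) : Set (Theory.ModelType.{0, 0, 0} T) :=
  { M | ∀ p ∈ P, ¬ MRealizes M p }

/-- A type is supported over a class `K` of models of `T`. -/
def MSupported {T : L.Theory} (K : Set (Theory.ModelType.{0, 0, 0} T)) (q : MType L) : Prop :=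
  ∃ φ : L.Formula (Fin q.1),
    (∃ M ∈ K, ∃ v : Fin q.1 → M, φ.Realize v) ∧
    ∀ M ∈ K, ∀ v : Fin q.1 → M, φ.Realize v → ∀ ψ ∈ q.2, ψ.Realize v

/-- A universal type is existentially supported over a class `K` of models of `T`. -/
def MESupported {T : L.Theory} (K : Set (Theory.ModelType.{0, 0, 0} T)) (q : MType L) : Prop :=
  ∃ φ : L.Formula (Fin q.1), IsExistentialFormula L φ ∧
    (∃ M ∈ K, ∃ v : Fin q.1 → M, φ.Realize v) ∧
    ∀ M ∈ K, ∀ v : Fin q.1 → M, φ.Realize v → ∀ ψ ∈ q.2, ψ.Realize v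


/-! ### Groups -/

/-- The function symbols of the language of groups. -/
inductive GroupFunc : ℕ → Type
  | mul : GroupFunc 2
  | inv : GroupFunc 1
  | one : GroupFunc 0

/-- The first-order language of groups. -/
def grpLang : FirstOrder.Language.{0, 0} := ⟨GroupFunc, fun _ => Empty⟩

/-- Any group is a `grpLang`-structure. -/
instance grpStructure (G : Type*) [Group G] : grpLang.Structure G where
  funMap {n} f v :=
    match f with
    | .mul => v 0 * v 1
    | .inv => (v 0)⁻¹
    | .one => 1
  RelMap {n} r := r.elim

/-- The universal theory `Th_∀(H)` of a group `H`. -/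
def uTheoryOf (H : Type*) [Group H] : grpLang.Theory :=
  { σ | IsUniversalFormula grpLang σ ∧ H ⊨ σ }

/-- The algebraic set `V(S)` defined by a set `S ⊆ H ∗ F(x₁,…,xₙ)` of equations. -/
def Vset {H : Type} [Group H] {n : ℕ} (S : Set (Monoid.Coprod H (FreeGroup (Fin n)))) :
    Set (Fin n → H) :=
  { g | ∀ s ∈ S, Monoid.Coprod.lift (MonoidHom.id H) (FreeGroup.lift g) s = 1 }

/-- A group `H` is equationally noetherian if every algebraic set over `H` is defined by a
finite subsystem. -/
def EquationallyNoetherian (H : Type) [Group H] : Prop :=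
  ∀ (n : ℕ) (S : Set (Monoid.Coprod H (FreeGroup (Fin n)))),
    ∃ S₀ ⊆ S, S₀.Finite ∧ Vset S = Vset S₀

/-- Bundled finitely generated `H`-limit groups (with countable-universe carrier):
finitely generated groups satisfying the universal theory of `H`. -/
def LimitGroup (H : Type) [Group H] : Type 1 :=
  { G : GrpCat.{0} // Group.FG G ∧ (G : Type) ⊨ uTheoryOf H }

instance limitGroupSetoid {H : Type} [Group H] : Setoid (LimitGroup H) where
  r A B := Nonempty ((A.1 : Type) ≃* (B.1 : Type))
  iseqv := ⟨fun A => ⟨MulEquiv.refl _⟩, fun ⟨e⟩ => ⟨e.symm⟩, fun ⟨e⟩ ⟨f⟩ => ⟨e.trans f⟩⟩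

/-- `GRank H G γ` : the group `G`, as a model of `Th_∀(H)`, has universal rank `Rk(G) = γ`
(with respect to some tuple-length). -/
def GRank (H : Type) [Group H] (G : Type) [Group G] (hmod : G ⊨ uTheoryOf H)
    (γ : Ordinal.{0}) : Prop :=
  ∃ n : ℕ, URankEq (uTheoryOf H) n γ
    (@Theory.ModelType.of grpLang (uTheoryOf H) G _ hmod One.instNonempty)

/-- `G` is `H`-determined: some finite set `X ⊆ G \ {1}` is such that every homomorphism
from `G` to an `H`-limit group killing no element of `X` is injective. -/
def HDetermined (H : Type) [Group H] (G : Type) [Group G] : Prop :=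
  ∃ X : Finset G, (1 : G) ∉ X ∧
    ∀ (L' : Type) [Group L'], Group.FG L' → (L' ⊨ uTheoryOf H) →
      ∀ f : G →* L', (∀ x ∈ X, f x ≠ 1) → Function.Injective f

end Paper

/-!
Fix a generating tuple `ā` of `G`. By equational noetherianity the relations of `ā` follow, in
every model of `Th_∀(H)`, from finitely many of them, `W`. If `X` witnesses that `G` is
`H`-determined, the quantifier-free formula "the words of `W` vanish and the words representing
`X` do not" forces, in every model `M` generated by a tuple `b̄`, a homomorphism `G → M`, `ā ↦ b̄`,
that kills no element of `X`; it is therefore injective, hence an isomorphism, and `b̄` has the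
universal type of `ā`.

Conversely, if `∃ ȳ ψ(c̄, ȳ)` supports the universal type of `ā`, then `ψ(ā, d̄)` holds in `G`
for some `d̄`. A homomorphism `f` that kills none of the finitely many elements `u v⁻¹` coming
from the false atomic subformulas `u = v` of `ψ(ā, d̄)` keeps `ψ` true at `(f ā, f d̄)` in the
image `f(G)`. This image is a model of `Th_∀(H)` generated by `f ā`, so `f ā` has the universal
type of `ā`, and `f` is injective.
-/

namespace Paper

open BoundedFormula

section FreeGroupLift

variable {α : Type*} {G K : Type*} [Group G] [Group K]

lemma lift_comp (f : G →* K) (v : α → G) :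
    FreeGroup.lift (f ∘ v) = f.comp (FreeGroup.lift v) :=
  FreeGroup.ext_hom _ _ fun _ => by simp

lemma exists_comp_eq_of_ker_le {a : α → G} {b : α → K}
    (ha : Function.Surjective (FreeGroup.lift a))
    (h : (FreeGroup.lift a).ker ≤ (FreeGroup.lift b).ker) : ∃ f : G →* K, f ∘ a = b :=
  ⟨(FreeGroup.lift a).liftOfSurjective ha ⟨FreeGroup.lift b, h⟩, funext fun i => by
    simpa using (FreeGroup.lift a).liftOfRightInverse_comp_apply _ _ ⟨FreeGroup.lift b, h⟩
      (FreeGroup.of i)⟩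

lemma injective_of_ker_lift_comp_le {a : α → G} (ha : Function.Surjective (FreeGroup.lift a))
    (f : G →* K) (h : (FreeGroup.lift (f ∘ a)).ker ≤ (FreeGroup.lift a).ker) :
    Function.Injective f := by
  refine (injective_iff_map_eq_one f).mpr fun x hx => ?_
  obtain ⟨w, rfl⟩ := ha x
  exact h (by simpa [lift_comp] using hx)

lemma surjective_of_surjective_lift_comp {a : α → G} (f : G →* K)
    (h : Function.Surjective (FreeGroup.lift (f ∘ a))) : Function.Surjective f := by
  rw [lift_comp, MonoidHom.coe_comp] at h
  exact h.of_comp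

end FreeGroupLift

section GroupLanguage

variable {α : Type*}

instance : Mul (grpLang.Term α) := ⟨Functions.apply₂ GroupFunc.mul⟩
instance : Inv (grpLang.Term α) := ⟨Functions.apply₁ GroupFunc.inv⟩
instance : One (grpLang.Term α) := ⟨Constants.term GroupFunc.one⟩

section TermRealize

variable {M : Type*} [grpLang.Structure M] (v : α → M) (t u : grpLang.Term α)

@[simp]
lemma realize_mul :
    (t * u).realize v = Structure.funMap (L := grpLang) GroupFunc.mul ![t.realize v, u.realize v] :=
  Term.realize_functions_apply₂

@[simp]
lemma realize_inv :
    t⁻¹.realize v = Structure.funMap (L := grpLang) GroupFunc.inv ![t.realize v] :=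
  Term.realize_functions_apply₁

@[simp]
lemma realize_one :
    (1 : grpLang.Term α).realize v = Structure.funMap (L := grpLang) GroupFunc.one ![] :=
  congrArg (Structure.funMap _) (Subsingleton.elim _ _)

end TermRealize

section Group

variable {G K : Type*} [Group G] [Group K]

@[simp]
lemma funMap_mul (v : Fin 2 → G) :
    Structure.funMap (L := grpLang) GroupFunc.mul v = v 0 * v 1 := rfl

@[simp]
lemma funMap_inv (v : Fin 1 → G) :
    Structure.funMap (L := grpLang) GroupFunc.inv v = (v 0)⁻¹ := rfl

@[simp]
lemma funMap_one (v : Fin 0 → G) : Structure.funMap (L := grpLang) GroupFunc.one v = 1 := rfl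

instance {F : Type*} [FunLike F G K] [MonoidHomClass F G K] : grpLang.StrongHomClass F G K where
  map_fun φ _ f x := by cases f <;> simp
  map_rel _ _ r := Empty.elim r

def _root_.MonoidHom.toGrpEmbedding (f : G →* K) (hf : Function.Injective f) :
    G ↪[grpLang] K where
  toFun := f
  inj' := hf
  map_fun' := HomClass.map_fun f
  map_rel' r := Empty.elim r

lemma exists_term_realize_of (w : FreeGroup α) :
    ∃ t : grpLang.Term α, t.realize FreeGroup.of = w := by
  induction w using FreeGroup.induction_on with
  | C1 => exact ⟨1, by simp⟩
  | of x => exact ⟨var x, rfl⟩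
  | inv_of x ih =>
    obtain ⟨t, ht⟩ := ih
    exact ⟨t⁻¹, by simp [ht]⟩
  | mul x y ihx ihy =>
    obtain ⟨t, rfl⟩ := ihx
    obtain ⟨u, rfl⟩ := ihy
    exact ⟨t * u, by simp⟩

noncomputable def wordTerm (w : FreeGroup α) : grpLang.Term α :=
  (exists_term_realize_of w).choose

@[simp]
lemma realize_wordTerm (v : α → G) (w : FreeGroup α) :
    (wordTerm w).realize v = FreeGroup.lift v w := by
  have hv : v = FreeGroup.lift v ∘ FreeGroup.of := funext fun _ => by simp
  rw [hv, HomClass.realize_term, wordTerm, (exists_term_realize_of w).choose_spec, ← hv]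

lemma generates_iff_surjective_lift {n : ℕ} {a : Fin n → G} :
    Generates grpLang a ↔ Function.Surjective (FreeGroup.lift a) := by
  refine ⟨fun h y => ?_, fun h y => ?_⟩
  · obtain ⟨t, rfl⟩ := h y
    refine ⟨t.realize FreeGroup.of, ?_⟩
    rw [← HomClass.realize_term]
    congr 1
    ext
    simp
  · obtain ⟨w, rfl⟩ := h y
    exact ⟨wordTerm w, realize_wordTerm a w⟩

lemma fg_of_generates {n : ℕ} {a : Fin n → G} (h : Generates grpLang a) : Group.FG G :=
  Group.fg_of_surjective (generates_iff_surjective_lift.mp h)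

lemma exists_generates_of_fg (h : Group.FG G) : ∃ (n : ℕ) (a : Fin n → G), Generates grpLang a := by
  obtain ⟨β, _, φ, hφ⟩ := Group.fg_iff_exists_freeGroup_hom_surjective_finite.mp h
  obtain ⟨n, ⟨e⟩⟩ := Finite.exists_equiv_fin β
  refine ⟨n, φ ∘ FreeGroup.of ∘ e.symm, generates_iff_surjective_lift.mpr ?_⟩
  have : FreeGroup.lift (φ ∘ FreeGroup.of ∘ e.symm) = φ.comp (FreeGroup.freeGroupCongr e).symm :=
    FreeGroup.ext_hom _ _ fun _ => by simp
  rw [this]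
  exact hφ.comp (FreeGroup.freeGroupCongr e).symm.surjective

noncomputable def wordEqOne (w : FreeGroup α) : grpLang.Formula α :=
  Term.equal (wordTerm w) 1

lemma isQF_wordEqOne (w : FreeGroup α) : (wordEqOne w).IsQF :=
  (IsAtomic.equal _ _).isQF

@[simp]
lemma realize_wordEqOne (v : α → G) (w : FreeGroup α) :
    (wordEqOne w).Realize v ↔ FreeGroup.lift v w = 1 := by
  simp [wordEqOne]

lemma exists_finset_realize_comp_iff_of_isQF {β : Type*} {k : ℕ} {ψ : grpLang.BoundedFormula β k}
    (hψ : ψ.IsQF) (v : β → G) (xs : Fin k → G) :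
    ∃ Y : Finset G, (1 : G) ∉ Y ∧ ∀ (D : Type*) [Group D] (f : G →* D), (∀ y ∈ Y, f y ≠ 1) →
      (ψ.Realize (f ∘ v) (f ∘ xs) ↔ ψ.Realize v xs) := by
  classical
  induction hψ with
  | falsum => exact ⟨∅, by simp, fun _ _ _ _ => Iff.rfl⟩
  | of_isAtomic hA =>
    cases hA with
    | equal t₁ t₂ =>
      simp only [realize_bdEqual, ← Sum.comp_elim, HomClass.realize_term]
      set x := t₁.realize (Sum.elim v xs)
      set y := t₂.realize (Sum.elim v xs)
      by_cases hxy : x = y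
      · exact ⟨∅, by simp, fun _ _ _ _ => by simp [hxy]⟩
      refine ⟨{x * y⁻¹}, by simpa [eq_comm (a := (1 : G)), mul_inv_eq_one] using hxy,
        fun _ _ f hf => ?_⟩
      have hfxy := hf _ (Finset.mem_singleton_self _)
      rw [map_mul, map_inv, ne_eq, mul_inv_eq_one] at hfxy
      exact iff_of_false hfxy hxy
    | rel R _ => exact Empty.elim R
  | imp _ _ ih₁ ih₂ =>
    obtain ⟨Y₁, hY₁, h₁⟩ := ih₁
    obtain ⟨Y₂, hY₂, h₂⟩ := ih₂
    refine ⟨Y₁ ∪ Y₂, by simp [hY₁, hY₂], fun D _ f hf => ?_⟩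
    rw [realize_imp, realize_imp, h₁ D f fun y hy => hf y (Finset.mem_union_left _ hy),
      h₂ D f fun y hy => hf y (Finset.mem_union_right _ hy)]

end Group

end GroupLanguage

section UniversalTheory

variable {L : FirstOrder.Language.{0, 0}} {β : Type}

lemma _root_.FirstOrder.Language.BoundedFormula.IsUniversal.alls {n : ℕ}
    {ψ : L.BoundedFormula β n} (h : ψ.IsUniversal) : ψ.alls.IsUniversal := by
  induction n with
  | zero => exact h
  | succ n ih => exact ih h.all

lemma IsUniversalFormula.isUniversal {φ : L.Formula β} (h : IsUniversalFormula L φ) :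
    φ.IsUniversal := by
  obtain ⟨k, ψ, hψ, rfl⟩ := h
  exact hψ.isUniversal.alls

lemma isUniversalFormula_of_isQF {φ : L.Formula β} (h : φ.IsQF) : IsUniversalFormula L φ :=
  ⟨0, φ, h, rfl⟩

lemma isExistentialFormula_of_isQF {φ : L.Formula β} (h : φ.IsQF) : IsExistentialFormula L φ :=
  ⟨0, φ, h, rfl⟩

lemma isQF_iInf {γ : Type*} [Finite γ] {n : ℕ} {f : γ → L.BoundedFormula β n}
    (h : ∀ i, (f i).IsQF) : (BoundedFormula.iInf f).IsQF := by
  have foldr_inf : ∀ l : List (L.BoundedFormula β n), (∀ φ ∈ l, φ.IsQF) →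
      (l.foldr (· ⊓ ·) ⊤).IsQF := by
    intro l hl
    induction l with
    | nil => exact IsQF.top
    | cons φ l ih => exact (hl φ (by simp)).inf (ih fun ψ hψ => hl ψ (by simp [hψ]))
  exact foldr_inf _ (by simp [h])

variable {H : Type} [Group H]

instance : (uTheoryOf H).IsUniversal := ⟨fun _ hφ => hφ.1.isUniversal⟩

instance {K : Type*} [Group K] [K ⊨ uTheoryOf H] (R : Subgroup K) : R ⊨ uTheoryOf H :=
  Theory.IsUniversal.models_of_embedding (R.subtype.toGrpEmbedding R.subtype_injective)

lemma realize_of_isQF_of_forall_realize {k : ℕ} {φ : grpLang.Formula (Fin k)} (hφ : φ.IsQF)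
    (hH : ∀ xs : Fin k → H, φ.Realize xs) {M : Type*} [grpLang.Structure M] [M ⊨ uTheoryOf H]
    (xs : Fin k → M) : φ.Realize xs := by
  have hmem : (BoundedFormula.relabel Sum.inr φ).alls ∈ uTheoryOf H :=
    ⟨⟨_, _, hφ.relabel _, rfl⟩,
      realize_alls.mpr fun xs => (Formula.realize_relabel_sumInr φ).mpr (hH xs)⟩
  exact (Formula.realize_relabel_sumInr φ).mp
    (realize_alls.mp (Theory.realize_sentence_of_mem _ hmem) xs)

lemma exists_group_of_model {M : Type*} [st : grpLang.Structure M] [M ⊨ uTheoryOf H] :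
    ∃ g : Group M, @grpStructure M g = st := by
  let _ : Mul M := ⟨fun x y => st.funMap GroupFunc.mul ![x, y]⟩
  let _ : Inv M := ⟨fun x => st.funMap GroupFunc.inv ![x]⟩
  let _ : One M := ⟨st.funMap GroupFunc.one ![]⟩
  have mul_assoc' (x y z : M) : x * y * z = x * (y * z) := by
    have h := realize_of_isQF_of_forall_realize (H := H)
      (φ := Term.equal (var 0 * var 1 * var 2) (var 0 * (var 1 * var 2)))
      (IsAtomic.equal _ _).isQF (fun _ => by simp [mul_assoc]) ![x, y, z]
    simp only [Formula.realize_equal, realize_mul, Term.realize_var] at h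
    exact h
  have one_mul' (x : M) : 1 * x = x := by
    have h := realize_of_isQF_of_forall_realize (H := H)
      (φ := Term.equal (1 * var 0) (var 0)) (IsAtomic.equal _ _).isQF (fun _ => by simp) ![x]
    simp only [Formula.realize_equal, realize_mul, realize_one, Term.realize_var] at h
    exact h
  have inv_mul_cancel' (x : M) : x⁻¹ * x = 1 := by
    have h := realize_of_isQF_of_forall_realize (H := H)
      (φ := Term.equal ((var 0)⁻¹ * var 0) 1) (IsAtomic.equal _ _).isQF (fun _ => by simp) ![x]
    simp only [Formula.realize_equal, realize_mul, realize_inv, realize_one, Term.realize_var] at h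
    exact h
  refine ⟨Group.ofLeftAxioms mul_assoc' one_mul' inv_mul_cancel', ?_⟩
  obtain ⟨fm, rm⟩ := st
  show (⟨_, _⟩ : grpLang.Structure M) = ⟨fm, rm⟩
  congr 1
  · funext n f v
    cases f
    · show fm GroupFunc.mul ![v 0, v 1] = fm GroupFunc.mul v
      congr 1; funext i; fin_cases i <;> rfl
    · show fm GroupFunc.inv ![v 0] = fm GroupFunc.inv v
      congr 1; funext i; fin_cases i; rfl
    · show fm GroupFunc.one ![] = fm GroupFunc.one v
      congr 1; funext i; exact i.elim0
  · funext n r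
    exact Empty.elim r

lemma EquationallyNoetherian.exists_finset_forall_lift_eq_one (hH : EquationallyNoetherian H)
    {n : ℕ} (S : Set (FreeGroup (Fin n))) :
    ∃ W : Finset (FreeGroup (Fin n)), ↑W ⊆ S ∧
      ∀ (M : Type*) [Group M] [M ⊨ uTheoryOf H] (b : Fin n → M),
        (∀ u ∈ W, FreeGroup.lift b u = 1) → ∀ w ∈ S, FreeGroup.lift b w = 1 := by
  classical
  obtain ⟨W, hWS, hW, hV⟩ :=
    Set.exists_subset_image_finite_and.mp (hH n (Monoid.Coprod.inr '' S))
  have mem_Vset {T : Set (FreeGroup (Fin n))} {xs : Fin n → H} :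
      xs ∈ Vset (Monoid.Coprod.inr '' T) ↔ ∀ w ∈ T, FreeGroup.lift xs w = 1 := by
    simp [Vset]
  refine ⟨hW.toFinset, by simpa using hWS, fun M _ _ b hb w hw => ?_⟩
  -- `V(S) = V(W)` in `H` makes `∀ x̄, (⋀_{u ∈ W} u(x̄) = 1) → w(x̄) = 1` a universal law of `H`
  have := realize_of_isQF_of_forall_realize (H := H)
    (φ := (Formula.iInf fun u : hW.toFinset => wordEqOne u.1).imp (wordEqOne w))
    (IsQF.imp (isQF_iInf fun _ => isQF_wordEqOne _) (isQF_wordEqOne w))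
    (fun xs => by
      simp only [Formula.realize_imp, Formula.realize_iInf, realize_wordEqOne]
      intro hxs
      have hxs : xs ∈ Vset (Monoid.Coprod.inr '' W) := mem_Vset.mpr fun u hu => hxs ⟨u, by simpa⟩
      exact mem_Vset.mp (hV ▸ hxs) w hw) b
  simp only [Formula.realize_imp, Formula.realize_iInf, realize_wordEqOne] at this
  exact this fun u => hb u u.2

end UniversalTheory

section Rank

variable {L : FirstOrder.Language.{0, 0}} {n : ℕ}

lemma not_realizesNType_pType_iff {M : Type*} [L.Structure M] (a : Fin n → M) :
    ¬ RealizesNType a (pType L n) ↔ Generates L a := by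
  have realize_ne (t : L.Term (Fin n)) (v : Fin 1 → M) :
      (Term.equal (t.relabel Sum.inl) (var (Sum.inr 0))).not.Realize (Sum.elim a v) ↔
        t.realize a ≠ v 0 := by
    simp [Term.realize_relabel]
  refine ⟨fun h y => ?_, fun h ⟨v, hv⟩ => ?_⟩
  · by_contra! hy
    exact h ⟨fun _ => y, by rintro _ ⟨t, rfl⟩; exact (realize_ne t _).mpr (hy t)⟩
  · obtain ⟨t, ht⟩ := h (v (0 : Fin 1))
    exact (realize_ne t v).mp (hv _ ⟨t, rfl⟩) ht

lemma uRankEq_iff (T : L.Theory) (α : Ordinal.{0}) (M : Theory.ModelType.{0, 0, 0} T) :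
    URankEq T n α M ↔ 1 ≤ α ∧ (∃ a : Fin n → M, Generates L a) ∧
      ∀ a : Fin n → M, Generates L a → ESupported (UKclass T n α) (utype a) := by
  unfold URankEq
  rw [WellFounded.fix_eq]
  rfl

lemma uKclass_one (T : L.Theory) : UKclass T n 1 = {P | Generates L P.2} := by
  ext P
  simp only [UKclass, Set.mem_ofPred_eq, not_realizesNType_pType_iff]
  exact and_iff_left fun β hβ N hN => absurd ((uRankEq_iff T β N).mp hN).1 (not_le.mpr hβ)

lemma forall_mem_utype_realize_iff {M N : Type*} [L.Structure M] [L.Structure N]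
    {a : Fin n → M} {b : Fin n → N} {v : Fin 0 → N} :
    (∀ ψ ∈ (utype (L := L) a).2, ψ.Realize (Sum.elim b v)) ↔
      ∀ ψ : L.Formula (Fin n), IsUniversalFormula L ψ → ψ.Realize a → ψ.Realize b := by
  constructor
  · intro h ψ hψ hψa
    exact (Formula.realize_relabel (g := Sum.inl)).mp (h _ ⟨ψ, hψ, hψa, rfl⟩)
  · rintro h _ ⟨ψ, hψ, hψa, rfl⟩
    exact (Formula.realize_relabel (g := Sum.inl)).mpr (h ψ hψ hψa)

end Rank

section Determination

variable {H G : Type} [Group H] [Group G]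

lemma comp_sum_elim_finZeroElim {γ M N : Type*} (f : M → N) (a : γ → M) :
    Sum.elim (f ∘ a) (finZeroElim : Fin 0 → N) = f ∘ Sum.elim a finZeroElim := by
  rw [Sum.comp_elim]
  exact congrArg _ (funext finZeroElim)

lemma ker_lift_eq_of_forall_universal {K : Type*} [Group K] {β : Type} {a : β → G} {b : β → K}
    (h : ∀ ψ : grpLang.Formula β, IsUniversalFormula grpLang ψ → ψ.Realize a → ψ.Realize b) :
    (FreeGroup.lift a).ker = (FreeGroup.lift b).ker := by
  ext w
  simp only [MonoidHom.mem_ker]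
  refine ⟨fun hw => ?_, fun hw => ?_⟩
  · simpa using h _ (isUniversalFormula_of_isQF (isQF_wordEqOne w)) (by simpa using hw)
  · by_contra hw'
    simpa [hw] using h _ (isUniversalFormula_of_isQF (isQF_wordEqOne w).not) (by simpa using hw')

lemma eSupported_utype_of_hDetermined (hH : EquationallyNoetherian H) (hmod : G ⊨ uTheoryOf H)
    (hdet : HDetermined H G) {n : ℕ} {a : Fin n → G} (ha : Generates grpLang a) :
    ESupported {P : Σ M : Theory.ModelType.{0, 0, 0} (uTheoryOf H), Fin n → M |
      Generates grpLang P.2} (utype a) := by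
  classical
  obtain ⟨X, hX1, hinj⟩ := hdet
  have ha' := generates_iff_surjective_lift.mp ha
  obtain ⟨word, hword⟩ := ha'.hasRightInverse
  obtain ⟨W, hW, hWS⟩ :=
    hH.exists_finset_forall_lift_eq_one ((FreeGroup.lift a).ker : Set (FreeGroup (Fin n)))
  let φ : grpLang.Formula (Fin n) := (Formula.iInf fun u : W => wordEqOne u.1) ⊓
    Formula.iInf fun x : X => (wordEqOne (word x)).not
  have realize_φ {M : Type} [Group M] (b : Fin n → M) : φ.Realize b ↔
      (∀ u ∈ W, FreeGroup.lift b u = 1) ∧ ∀ x ∈ X, FreeGroup.lift b (word x) ≠ 1 := by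
    simp [φ]
  have hφ : φ.IsQF := (isQF_iInf fun _ => isQF_wordEqOne _).inf
    (isQF_iInf fun _ => (isQF_wordEqOne _).not)
  refine ⟨φ.relabel Sum.inl, isExistentialFormula_of_isQF (hφ.relabel _),
    ⟨⟨Theory.ModelType.of (uTheoryOf H) G, a⟩, ha, finZeroElim, ?_⟩, ?_⟩
  · refine (Formula.realize_relabel (g := Sum.inl)).mpr ((realize_φ a).mpr ⟨fun u hu => hW hu, ?_⟩)
    intro x hx h1
    exact hX1 ((hword x).symm.trans h1 ▸ hx)
  · rintro ⟨⟨M⟩, b⟩ hb v hbφ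
    obtain ⟨_, rfl⟩ := exists_group_of_model (H := H) (M := M)
    have hbφ := (realize_φ b).mp ((Formula.realize_relabel (g := Sum.inl)).mp hbφ)
    obtain ⟨f, rfl⟩ := exists_comp_eq_of_ker_le ha' fun w hw => hWS M _ hbφ.1 w hw
    have hfX (x : G) (hx : x ∈ X) : f x ≠ 1 := by
      simpa [lift_comp, hword x] using hbφ.2 x hx
    have hf : Function.Bijective f := ⟨hinj M (fg_of_generates hb) inferInstance f hfX,
      surjective_of_surjective_lift_comp f (generates_iff_surjective_lift.mp hb)⟩
    exact forall_mem_utype_realize_iff.mpr fun ψ _ hψ =>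
      (StrongHomClass.realize_formula (MulEquiv.ofBijective f hf) ψ).mpr hψ

lemma exists_isQF_of_eSupported_utype {n : ℕ} {a : Fin n → G} (ha : Generates grpLang a)
    (hsupp : ESupported {P : Σ M : Theory.ModelType.{0, 0, 0} (uTheoryOf H), Fin n → M |
      Generates grpLang P.2} (utype a)) :
    ∃ (k : ℕ) (ψ : grpLang.BoundedFormula (Fin n ⊕ Fin 0) k) (ds : Fin k → G),
      ψ.IsQF ∧ ψ.Realize (Sum.elim a finZeroElim) ds ∧
      ∀ (M : Type) [Group M] [M ⊨ uTheoryOf H] (b : Fin n → M), Generates grpLang b →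
        ψ.exs.Realize (Sum.elim b finZeroElim) →
          (FreeGroup.lift a).ker = (FreeGroup.lift b).ker := by
  obtain ⟨_, ⟨k, ψ, hψ, rfl⟩, ⟨⟨⟨M₀⟩, b₀⟩, hb₀, v₀, hb₀ψ⟩, hforce⟩ := hsupp
  obtain ⟨_, rfl⟩ := exists_group_of_model (H := H) (M := M₀)
  obtain rfl : v₀ = finZeroElim := funext finZeroElim
  have hker (M : Type) [Group M] [M ⊨ uTheoryOf H] (b : Fin n → M) (hb : Generates grpLang b)
      (hbψ : ψ.exs.Realize (Sum.elim b finZeroElim)) :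
      (FreeGroup.lift a).ker = (FreeGroup.lift b).ker :=
    ker_lift_eq_of_forall_universal
      (forall_mem_utype_realize_iff.mp (hforce ⟨.of (uTheoryOf H) M, b⟩ hb _ hbψ))
  have ha' := generates_iff_surjective_lift.mp ha
  have hker₀ := hker M₀ b₀ hb₀ hb₀ψ
  obtain ⟨f₀, rfl⟩ := exists_comp_eq_of_ker_le (K := M₀) ha' hker₀.le
  -- `a ↦ b₀` is an isomorphism `G ≃* M₀`, so the witnesses of `∃ ȳ ψ` pull back to `G`
  let e : G ≃* M₀ := MulEquiv.ofBijective f₀ ⟨injective_of_ker_lift_comp_le ha' f₀ hker₀.ge,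
    surjective_of_surjective_lift_comp f₀ (generates_iff_surjective_lift.mp hb₀)⟩
  obtain ⟨ds, hds⟩ := realize_exs.mp ((StrongHomClass.realize_formula e _).mp
    ((congrArg _ (comp_sum_elim_finZeroElim f₀ a)).mp hb₀ψ))
  exact ⟨k, ψ, ds, hψ, hds, hker⟩

lemma hDetermined_of_eSupported_utype {n : ℕ} {a : Fin n → G} (ha : Generates grpLang a)
    (hsupp : ESupported {P : Σ M : Theory.ModelType.{0, 0, 0} (uTheoryOf H), Fin n → M |
      Generates grpLang P.2} (utype a)) : HDetermined H G := by
  obtain ⟨k, ψ, ds, hψ, hds, hker⟩ := exists_isQF_of_eSupported_utype ha hsupp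
  obtain ⟨Y, hY1, hY⟩ := exists_finset_realize_comp_iff_of_isQF hψ (Sum.elim a finZeroElim) ds
  refine ⟨Y, hY1, fun K _ _ _ f hfY => ?_⟩
  -- the image of `f`, generated by `f ∘ a`, is a model of `∃ ȳ ψ` at `f ∘ a`
  have hfY' (y : G) (hy : y ∈ Y) : f.rangeRestrict y ≠ 1 := by
    simpa [← MonoidHom.mem_ker, MonoidHom.ker_rangeRestrict] using hfY y hy
  have ha' := generates_iff_surjective_lift.mp ha
  have hgen : Generates grpLang (f.rangeRestrict ∘ a) := by
    rw [generates_iff_surjective_lift, lift_comp, MonoidHom.coe_comp]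
    exact f.rangeRestrict_surjective.comp ha'
  have hψ_range : ψ.exs.Realize (Sum.elim (f.rangeRestrict ∘ a) finZeroElim) := by
    rw [comp_sum_elim_finZeroElim, realize_exs]
    exact ⟨f.rangeRestrict ∘ ds, (hY _ _ hfY').mpr hds⟩
  exact f.rangeRestrict_injective_iff.mp
    (injective_of_ker_lift_comp_le ha' _ (hker f.range _ hgen hψ_range).ge)

end Determination

end Paper

/-- For an equationally noetherian group `H`, a finitely generated
`H`-limit group `G` is `H`-determined iff `Rk(G) = 1`. -/
theorem stmt_17 (H : Type) [Group H] (hH : Paper.EquationallyNoetherian H)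
    (G : Type) [Group G] (hfg : Group.FG G) (hmod : G ⊨ Paper.uTheoryOf H) :
    Paper.HDetermined H G ↔ Paper.GRank H G hmod 1 := by
  simp only [Paper.GRank, Paper.uRankEq_iff, Paper.uKclass_one, le_refl, true_and]
  constructor
  · intro hdet
    obtain ⟨n, a, ha⟩ := Paper.exists_generates_of_fg hfg
    exact ⟨n, ⟨a, ha⟩, fun _ => Paper.eSupported_utype_of_hDetermined hH hmod hdet⟩
  · rintro ⟨n, ⟨a, ha⟩, hsupp⟩
    exact Paper.hDetermined_of_eSupported_utype ha (hsupp a ha)
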